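/- ∫_1^∞ (1/u + (1 − 1/u)² log(1 − 1/u)) du = 2(π²/6 − 1) = π²/3 − 2. -/

import Mathlib

/-!
An antiderivative of the integrand on `(1, ∞)` is
`(u + 1) (1 - 1/u) log (1 - 1/u) + 1/u - 2 Li₂ (1/u)`, where `Li₂ x = ∑ xⁿ⁺¹ / (n + 1)²` has
derivative `-log (1 - x) / x`. It tends to `-1` at infinity and equals `1 - 2 ζ(2)` at `u = 1`,
and since the integrand is nonnegative the improper integral is the difference of these values.
-/

open Real Set Filter Topology MeasureTheory

noncomputable def dilog (x : ℝ) : ℝ := ∑' n : ℕ, x ^ (n + 1) / ((n : ℝ) + 1) ^ 2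

lemma hasSum_one_div_succ_sq : HasSum (fun n : ℕ => 1 / ((n : ℝ) + 1) ^ 2) (π ^ 2 / 6) := by
  simpa using (hasSum_nat_add_iff' 1).mpr hasSum_zeta_two

lemma dilog_zero : dilog 0 = 0 := by simp [dilog]

lemma dilog_one : dilog 1 = π ^ 2 / 6 := by
  simpa [dilog] using hasSum_one_div_succ_sq.tsum_eq

lemma norm_pow_succ_div_succ_sq_le {x : ℝ} (hx : |x| ≤ 1) (n : ℕ) :
    ‖x ^ (n + 1) / ((n : ℝ) + 1) ^ 2‖ ≤ 1 / ((n : ℝ) + 1) ^ 2 := by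
  rw [norm_div, norm_pow, Real.norm_eq_abs, norm_of_nonneg (by positivity)]
  gcongr
  exact pow_le_one₀ (abs_nonneg x) hx

lemma continuousOn_dilog : ContinuousOn dilog (Icc (-1) 1) :=
  continuousOn_tsum (fun n => by fun_prop) hasSum_one_div_succ_sq.summable
    fun n _ hx => norm_pow_succ_div_succ_sq_le (abs_le.mpr hx) n

lemma hasSum_pow_div_succ {x : ℝ} (hx : |x| < 1) (hx0 : x ≠ 0) :
    HasSum (fun n : ℕ => x ^ n / ((n : ℝ) + 1)) (-log (1 - x) / x) := by
  have hterm : (fun n : ℕ => x ^ n / ((n : ℝ) + 1))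
      = fun n : ℕ => x ^ (n + 1) / ((n : ℝ) + 1) / x := by
    ext n
    rw [pow_succ]
    field_simp
  rw [hterm]
  exact (hasSum_pow_div_log_of_abs_lt_one hx).div_const x

lemma hasDerivAt_dilog {x : ℝ} (hx : |x| < 1) (hx0 : x ≠ 0) :
    HasDerivAt dilog (-log (1 - x) / x) x := by
  set r := (|x| + 1) / 2
  have hxr : |x| < r := by simp only [r]; linarith
  have hr1 : r < 1 := by simp only [r]; linarith
  have hterm (n : ℕ) (y : ℝ) : HasDerivAt (fun z : ℝ => z ^ (n + 1) / ((n : ℝ) + 1) ^ 2)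
      (y ^ n / ((n : ℝ) + 1)) y := by
    refine ((hasDerivAt_pow (n + 1) y).div_const (((n : ℝ) + 1) ^ 2)).congr_deriv ?_
    push_cast
    field_simp
  have hbound (n : ℕ) (y : ℝ) (hy : y ∈ Ioo (-r) r) : ‖y ^ n / ((n : ℝ) + 1)‖ ≤ r ^ n := by
    rw [norm_div, norm_pow, Real.norm_eq_abs, norm_of_nonneg (by positivity)]
    calc |y| ^ n / ((n : ℝ) + 1)
        ≤ |y| ^ n := div_le_self (by positivity) (by linarith [n.cast_nonneg (α := ℝ)])
      _ ≤ r ^ n := by gcongr; exact (abs_lt.mpr hy).le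
  have h := hasDerivAt_tsum_of_isPreconnected (summable_geometric_of_lt_one (by positivity) hr1)
    isOpen_Ioo isPreconnected_Ioo (fun n y _ => hterm n y) hbound
    (y₀ := 0) (by simp [show 0 < r by positivity]) (by simp) (abs_lt.mp hxr)
  rwa [(hasSum_pow_div_succ hx hx0).tsum_eq] at h

lemma tendsto_log_one_add_div_self : Tendsto (fun t => log (1 + t) / t) (𝓝[≠] 0) (𝓝 1) := by
  simpa [div_eq_inv_mul] using hasDerivAt_iff_tendsto_slope_zero.mp (hasDerivAt_log one_ne_zero)

lemma one_div_add_sq_mul_log_nonneg {u : ℝ} (hu : 1 ≤ u) :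
    0 ≤ 1 / u + (1 - 1 / u) ^ 2 * log (1 - 1 / u) := by
  have hw : 0 ≤ 1 - 1 / u := sub_nonneg.mpr ((div_le_one (by positivity)).mpr hu)
  nlinarith [self_sub_one_le_mul_log hw, sq_nonneg (1 / u)]

noncomputable def antiderivative (u : ℝ) : ℝ :=
  (u + 1) * ((1 - 1 / u) * log (1 - 1 / u)) + 1 / u - 2 * dilog (1 / u)

lemma antiderivative_one : antiderivative 1 = 1 - π ^ 2 / 3 := by
  rw [antiderivative, div_one, dilog_one]
  ring_nf

lemma hasDerivAt_antiderivative {u : ℝ} (hu : 1 < u) :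
    HasDerivAt antiderivative (1 / u + (1 - 1 / u) ^ 2 * log (1 - 1 / u)) u := by
  have hu0 : u ≠ 0 := by positivity
  have hinv_pos : 0 < 1 / u := by positivity
  have hinv_lt : 1 / u < 1 := (div_lt_one (by positivity)).mpr hu
  have hinv : HasDerivAt (fun v : ℝ => 1 / v) (-(1 / u ^ 2)) u := by
    simpa [one_div] using hasDerivAt_inv hu0
  have hw : HasDerivAt (fun v : ℝ => 1 - 1 / v) (1 / u ^ 2) u := by
    simpa using hinv.const_sub 1
  have hmulLog := (hasDerivAt_mul_log (by linarith : 1 - 1 / u ≠ 0)).comp u hw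
  have hdilog := (hasDerivAt_dilog (by rwa [abs_of_pos hinv_pos]) hinv_pos.ne').comp u hinv
  refine (((((hasDerivAt_id u).add_const 1).mul hmulLog).add hinv).sub
    (hdilog.const_mul 2)).congr_deriv ?_
  simp only [id, Function.comp]
  field_simp
  ring

lemma continuousWithinAt_antiderivative_one : ContinuousWithinAt antiderivative (Ici 1) 1 := by
  have hinv : ContinuousAt (fun u : ℝ => 1 / u) 1 :=
    continuousAt_const.div continuousAt_id one_ne_zero
  have hmulLog : ContinuousAt (fun u : ℝ => (u + 1) * ((1 - 1 / u) * log (1 - 1 / u))) 1 :=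
    (continuousAt_id.add continuousAt_const).mul
      (continuous_mul_log.continuousAt.comp (continuousAt_const.sub hinv))
  have hdilog : ContinuousWithinAt (fun u : ℝ => dilog (1 / u)) (Ici 1) 1 := by
    refine (continuousOn_dilog (1 / 1) (by norm_num)).comp hinv.continuousWithinAt ?_
    intro u (hu : 1 ≤ u)
    have hinv_pos : 0 < 1 / u := by positivity
    exact ⟨by linarith, (div_le_one (by positivity)).mpr hu⟩
  exact (hmulLog.continuousWithinAt.add hinv.continuousWithinAt).sub (hdilog.const_mul 2)

lemma tendsto_antiderivative_atTop : Tendsto antiderivative atTop (𝓝 (-1)) := by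
  have hinv : Tendsto (fun u : ℝ => 1 / u) atTop (𝓝 0) := by
    simpa [one_div] using tendsto_inv_atTop_zero
  have hneg_inv : Tendsto (fun u : ℝ => -(1 / u)) atTop (𝓝[≠] 0) := by
    refine tendsto_nhdsWithin_iff.mpr ⟨by simpa using hinv.neg, ?_⟩
    filter_upwards [eventually_gt_atTop 0] with u hu
    simp [hu.ne']
  have hmulLog :
      Tendsto (fun u : ℝ => (u + 1) * ((1 - 1 / u) * log (1 - 1 / u))) atTop (𝓝 (-1)) := by
    -- `(u + 1)(1 - 1/u) = (1 - 1/u²) u`, and `u log (1 - 1/u) → -1`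
    have h := (((hinv.pow 2).const_sub 1).mul (tendsto_log_one_add_div_self.comp hneg_inv)).neg
    refine (h.congr' ?_).trans (by norm_num)
    filter_upwards [eventually_gt_atTop 0] with u hu
    simp only [Function.comp]
    field_simp
    ring_nf
  have hdilog : Tendsto (fun u : ℝ => dilog (1 / u)) atTop (𝓝 0) := by
    rw [← dilog_zero]
    exact (continuousOn_dilog.continuousAt (Icc_mem_nhds (by norm_num) (by norm_num))).tendsto.comp
      hinv
  have h := (hmulLog.add hinv).sub (hdilog.const_mul 2)
  rwa [add_zero, mul_zero, sub_zero] at h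

/-- `∫_1^∞ (1/u + (1 − 1/u)² log(1 − 1/u)) du = 2(π²/6 − 1) = π²/3 − 2`. -/
theorem integral_one_to_infty :
    ∫ u in Set.Ioi (1:ℝ), (1 / u + (1 - 1 / u) ^ 2 * Real.log (1 - 1 / u))
      = Real.pi ^ 2 / 3 - 2 := by
  rw [integral_Ioi_of_hasDerivAt_of_nonneg continuousWithinAt_antiderivative_one
    (fun u hu => hasDerivAt_antiderivative hu)
    (fun u hu => one_div_add_sq_mul_log_nonneg (le_of_lt hu)) tendsto_antiderivative_atTop,
    antiderivative_one]
  ring
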